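/- Let n ≥ 2 and let φ : ℂⁿ → ℝ be a smooth function such that {z ∈ ℂⁿ : φ(z) > 0} is nonempty. Then for each j ∈ {1,…,n} the function z ↦ (1 + |z|²)(∂φ/∂z̄_j + z_j Σ_{l=1}^n z̄_l ∂φ/∂z̄_l) is holomorphic on ℂⁿ if and only if there exist a Hermitian n×n matrix (c_{jk}), complex constants α_1,…,α_n, and a real constant γ such that (1 + |z|²) φ(z) = Σ_{j,k} c_{jk} z_j z̄_k + Re(Σ_k α_k z_k) + γ on ℂⁿ. (The displayed function is the j-th component of (∂̄φ)^♯ with respect to the Fubini–Study metric h_{j k̄} = ∂_j ∂_{k̄} log(1 + |z|²) on ℂⁿ, and its holomorphicity characterizes when the conformal metric g = φ^{-1} h on {φ > 0} has holomorphic torsion.) -/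

import Mathlib

/-!
Put `F = (1 + |z|²) φ` and `Gⱼ = ∂F/∂z̄ⱼ = zⱼ φ + (1 + |z|²) ∂φ/∂z̄ⱼ`. The field in question is
`Gⱼ + zⱼ (Σₗ z̄ₗ Gₗ - F)`, whose `∂/∂z̄ₖ` is `aⱼ + zⱼ Σₗ z̄ₗ aₗ` with `aⱼ = ∂Gⱼ/∂z̄ₖ`; as
`1 + |z|² ≠ 0` this vanishes for all `j` only if `a = 0`. So the field is holomorphic iff all
`Gⱼ` are.

If the `Gₖ` are holomorphic, so are the `∂Gₖ/∂zⱼ = ∂²F/∂zⱼ∂z̄ₖ`; as `F` is real their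
conjugates `∂²F/∂zₖ∂z̄ⱼ` are holomorphic too, so they are constants `cⱼₖ` forming a Hermitian
matrix. Hence each `Gₖ` is affine, and `F` minus the model `Σ cⱼₖ zⱼ z̄ₖ + Re (α · z) + γ` with
the same `∂̄`-derivatives is a real function with vanishing `∂̄`, hence constant. Conversely, the
`Gₖ` of the model are holomorphic affine functions.
-/

open Complex MeasureTheory Finset

noncomputable section

/-- The Wirtinger derivative `∂f/∂z̄ₖ` of a (real-differentiable) function
`f : ℂⁿ → ℂ`, namely `½(∂f/∂xₖ + i ∂f/∂yₖ)`. -/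
def wirtZBar {n : ℕ} (f : (Fin n → ℂ) → ℂ) (k : Fin n) (z : Fin n → ℂ) : ℂ :=
  (1 / 2 : ℂ) *
    (fderiv ℝ f z (Pi.single k 1) + Complex.I * fderiv ℝ f z (Pi.single k Complex.I))

/-- The Wirtinger derivative `∂ψ/∂z̄ₖ` of a real-valued function. -/
def wirtZBarR {n : ℕ} (ψ : (Fin n → ℂ) → ℝ) (k : Fin n) (z : Fin n → ℂ) : ℂ :=
  wirtZBar (fun w => (ψ w : ℂ)) k z

/-- `|z|² = Σ |zₖ|²` for `z ∈ ℂⁿ`. -/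
def normSq' {n : ℕ} (z : Fin n → ℂ) : ℝ := ∑ i, Complex.normSq (z i)

open scoped ContDiff

section RealCalculus

variable {E : Type*} [NormedAddCommGroup E] [NormedSpace ℝ E] {m : WithTop ℕ∞}

@[fun_prop]
theorem ContDiff.conj {f : E → ℂ} (hf : ContDiff ℝ m f) :
    ContDiff ℝ m (fun x => starRingEnd ℂ (f x)) :=
  conjCLE.contDiff.comp hf

@[fun_prop]
theorem ContDiff.ofReal {f : E → ℝ} (hf : ContDiff ℝ m f) : ContDiff ℝ m (fun x => (f x : ℂ)) :=
  ofRealCLM.contDiff.comp hf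

theorem fderiv_conj_apply {f : E → ℂ} {z : E} (hf : DifferentiableAt ℝ f z) (v : E) :
    fderiv ℝ (fun y => starRingEnd ℂ (f y)) z v = starRingEnd ℂ (fderiv ℝ f z v) := by
  rw [show (fun y => starRingEnd ℂ (f y)) = conjCLE ∘ f from rfl,
    fderiv_comp z conjCLE.differentiableAt hf, conjCLE.fderiv]
  rfl

theorem fderiv_fderiv_apply_comm {F : Type*} [NormedAddCommGroup F] [NormedSpace ℝ F]
    {f : E → F} {z : E} (hf : ContDiffAt ℝ 2 f z) (v w : E) :
    fderiv ℝ (fun y => fderiv ℝ f y w) z v = fderiv ℝ (fun y => fderiv ℝ f y v) z w := by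
  have hd : DifferentiableAt ℝ (fderiv ℝ f) z :=
    (hf.fderiv_right (m := 1) le_rfl).differentiableAt one_ne_zero
  have key : ∀ a b, fderiv ℝ (fun y => fderiv ℝ f y b) z a = fderiv ℝ (fderiv ℝ f) z a b :=
    fun a b => by simp [fderiv_clm_apply hd (differentiableAt_const b)]
  rw [key, key]
  exact hf.isSymmSndFDerivAt (by simp) v w

end RealCalculus

variable {n : ℕ}

theorem ofReal_normSq' (z : Fin n → ℂ) :
    ((normSq' z : ℝ) : ℂ) = ∑ l, z l * starRingEnd ℂ (z l) := by
  simp [normSq', mul_conj]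

theorem contDiff_normSq' {m : WithTop ℕ∞} : ContDiff ℝ m (normSq' (n := n)) := by
  show ContDiff ℝ m fun z : Fin n → ℂ => ∑ i, Complex.normSq (z i)
  simp only [normSq_eq_norm_sq]
  exact ContDiff.sum fun i _ => (contDiff_norm_sq ℝ).comp (contDiff_apply ℝ ℂ i)

def wirtZ (f : (Fin n → ℂ) → ℂ) (k : Fin n) (z : Fin n → ℂ) : ℂ :=
  (1 / 2 : ℂ) * (fderiv ℝ f z (Pi.single k 1) - I * fderiv ℝ f z (Pi.single k I))

section WirtingerCalculus

variable {f g : (Fin n → ℂ) → ℂ} {z : Fin n → ℂ} {k : Fin n}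

theorem wirtZBar_add (hf : DifferentiableAt ℝ f z) (hg : DifferentiableAt ℝ g z) :
    wirtZBar (fun y => f y + g y) k z = wirtZBar f k z + wirtZBar g k z := by
  simp only [wirtZBar, fderiv_fun_add hf hg, add_apply]; ring

theorem wirtZBar_sub (hf : DifferentiableAt ℝ f z) (hg : DifferentiableAt ℝ g z) :
    wirtZBar (fun y => f y - g y) k z = wirtZBar f k z - wirtZBar g k z := by
  simp only [wirtZBar, fderiv_fun_sub hf hg, sub_apply]; ring

theorem wirtZBar_mul (hf : DifferentiableAt ℝ f z) (hg : DifferentiableAt ℝ g z) :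
    wirtZBar (fun y => f y * g y) k z = f z * wirtZBar g k z + g z * wirtZBar f k z := by
  simp only [wirtZBar, fderiv_fun_mul hf hg, add_apply, smul_apply, smul_eq_mul]; ring

theorem wirtZBar_sum {ι : Type*} (s : Finset ι) {A : ι → (Fin n → ℂ) → ℂ}
    (h : ∀ i ∈ s, DifferentiableAt ℝ (A i) z) :
    wirtZBar (fun y => ∑ i ∈ s, A i y) k z = ∑ i ∈ s, wirtZBar (A i) k z := by
  simp only [wirtZBar, fderiv_fun_sum h, _root_.sum_apply, Finset.mul_sum,
    ← Finset.sum_add_distrib, mul_add]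

@[simp]
theorem wirtZBar_const (c : ℂ) : wirtZBar (fun _ => c) k z = 0 := by
  simp [wirtZBar]

@[simp]
theorem wirtZ_const (c : ℂ) : wirtZ (fun _ => c) k z = 0 := by
  simp [wirtZ]

theorem wirtZBar_apply (j : Fin n) : wirtZBar (fun y => y j) k z = 0 := by
  rw [wirtZBar, fderiv_apply differentiableAt_id]
  by_cases h : j = k <;> simp [h]

theorem wirtZ_apply (j : Fin n) : wirtZ (fun y => y j) k z = if j = k then 1 else 0 := by
  rw [wirtZ, fderiv_apply differentiableAt_id]
  by_cases h : j = k <;> simp [h, one_add_one_eq_two]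

theorem wirtZBar_conj (hf : DifferentiableAt ℝ f z) :
    wirtZBar (fun y => starRingEnd ℂ (f y)) k z = starRingEnd ℂ (wirtZ f k z) := by
  simp only [wirtZBar, wirtZ, fderiv_conj_apply hf, map_mul, map_sub, map_div₀, map_one,
    map_ofNat, conj_I]
  ring

theorem wirtZ_conj (hf : DifferentiableAt ℝ f z) :
    wirtZ (fun y => starRingEnd ℂ (f y)) k z = starRingEnd ℂ (wirtZBar f k z) := by
  simp only [wirtZBar, wirtZ, fderiv_conj_apply hf, map_mul, map_add, map_div₀, map_one,
    map_ofNat, conj_I]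
  ring

theorem wirtZBar_conj_apply (j : Fin n) :
    wirtZBar (fun y => starRingEnd ℂ (y j)) k z = if j = k then 1 else 0 := by
  rw [wirtZBar_conj (by fun_prop), wirtZ_apply, apply_ite (starRingEnd ℂ), map_one, map_zero]

theorem ContDiff.wirtZBar {p m : WithTop ℕ∞} (hf : ContDiff ℝ p f) (hmp : m + 1 ≤ p) :
    ContDiff ℝ m (wirtZBar f k) := by
  have := hf.fderiv_right hmp
  unfold _root_.wirtZBar
  fun_prop

theorem ContDiff.wirtZ {p m : WithTop ℕ∞} (hf : ContDiff ℝ p f) (hmp : m + 1 ≤ p) :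
    ContDiff ℝ m (wirtZ f k) := by
  have := hf.fderiv_right hmp
  unfold _root_.wirtZ
  fun_prop

theorem wirtZBar_wirtZ_comm (hf : ContDiffAt ℝ 2 f z) (j : Fin n) :
    wirtZBar (wirtZ f j) k z = wirtZ (wirtZBar f k) j z := by
  have hd : ∀ w, DifferentiableAt ℝ (fun y => fderiv ℝ f y w) z := fun w =>
    ((hf.fderiv_right (m := 1) le_rfl).differentiableAt one_ne_zero).clm_apply
      (differentiableAt_const w)
  unfold _root_.wirtZBar _root_.wirtZ
  simp (disch := fun_prop) only [fderiv_const_mul, fderiv_fun_add, fderiv_fun_sub,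
    smul_apply, add_apply, sub_apply, smul_eq_mul, fderiv_fderiv_apply_comm hf (Pi.single k _)]
  ring

end WirtingerCalculus

section Holomorphy

variable {f : (Fin n → ℂ) → ℂ} {z : Fin n → ℂ} {k : Fin n}

theorem ContinuousLinearMap.ext_single_one_single_I {F : Type*} [NormedAddCommGroup F]
    [NormedSpace ℝ F] {L L' : (Fin n → ℂ) →L[ℝ] F}
    (h1 : ∀ k, L (Pi.single k 1) = L' (Pi.single k 1))
    (hI : ∀ k, L (Pi.single k I) = L' (Pi.single k I)) : L = L' :=
  ContinuousLinearMap.coe_injective <| (Pi.basis fun _ => basisOneI).ext fun ⟨k, i⟩ => by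
    fin_cases i <;> simp [Pi.basis_apply, h1, hI]

theorem fderiv_real_apply_single (hf : DifferentiableAt ℂ f z) (a : ℂ) :
    fderiv ℝ f z (Pi.single k a) = a * fderiv ℂ f z (Pi.single k 1) := by
  rw [hf.fderiv_restrictScalars ℝ, ContinuousLinearMap.coe_restrictScalars',
    show (Pi.single k a : Fin n → ℂ) = a • Pi.single k 1 by simp [← Pi.single_smul], map_smul,
    smul_eq_mul]

theorem wirtZ_eq_fderiv (hf : DifferentiableAt ℂ f z) :
    wirtZ f k z = fderiv ℂ f z (Pi.single k 1) := by
  rw [wirtZ, fderiv_real_apply_single hf, fderiv_real_apply_single hf]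
  linear_combination (-1 / 2 * fderiv ℂ f z (Pi.single k 1)) * I_mul_I

theorem DifferentiableAt.wirtZBar_eq_zero (hf : DifferentiableAt ℂ f z) : wirtZBar f k z = 0 := by
  rw [wirtZBar, fderiv_real_apply_single hf, fderiv_real_apply_single hf]
  linear_combination (1 / 2 * fderiv ℂ f z (Pi.single k 1)) * I_mul_I

theorem differentiableAt_complex_of_wirtZBar_eq_zero (hf : DifferentiableAt ℝ f z)
    (h : ∀ k, wirtZBar f k z = 0) : DifferentiableAt ℂ f z := by
  set L := fderiv ℝ f z
  have single_I : ∀ k : Fin n, (Pi.single k I : Fin n → ℂ) = I • Pi.single k 1 := fun k => by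
    simp [← Pi.single_smul]
  -- the Cauchy–Riemann equations `L (i v) = i L v`, checked on a real basis
  have hI : ∀ v, L (I • v) = I • L v := by
    have : L.comp ((I : ℂ) • ContinuousLinearMap.id ℝ (Fin n → ℂ)) = I • L := by
      refine ContinuousLinearMap.ext_single_one_single_I (fun k => ?_) (fun k => ?_)
      all_goals
        have hk : L (Pi.single k 1) + I * L (Pi.single k I) = 0 := by
          simpa [wirtZBar] using h k
        simp only [ContinuousLinearMap.comp_apply, smul_apply,
          ContinuousLinearMap.id_apply, smul_eq_mul]
      · rw [← single_I]
        linear_combination (-I) * hk + L (Pi.single k I) * I_mul_I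
      · rw [show I • (Pi.single k I : Fin n → ℂ) = -Pi.single k 1 by
          rw [single_I, smul_smul, I_mul_I, neg_one_smul], map_neg]
        linear_combination -hk
    intro v
    simpa using congrArg (· v) this
  refine (differentiableAt_iff_restrictScalars ℝ hf).2
    ⟨{ toFun := L
       map_add' := L.map_add
       map_smul' := fun c v => ?_
       cont := L.cont }, rfl⟩
  simpa using real_linearMap_map_smul_complex
    (ℓ := (L : (Fin n → ℂ) →ₗ[ℝ] ℂ).comp ((LinearMap.id : ℂ →ₗ[ℝ] ℂ).smulRight v))
    (by simpa using hI v) c 1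

theorem differentiable_complex_iff_wirtZBar_eq_zero (hf : Differentiable ℝ f) :
    Differentiable ℂ f ↔ ∀ k z, wirtZBar f k z = 0 :=
  ⟨fun h _ z => (h z).wirtZBar_eq_zero,
    fun h z => differentiableAt_complex_of_wirtZBar_eq_zero (hf z) (h · z)⟩

theorem eq_of_wirtZBar_eq_zero_of_wirtZBar_conj_eq_zero (hf : Differentiable ℝ f)
    (h : ∀ k z, wirtZBar f k z = 0) (hconj : ∀ k z, wirtZBar (fun y => starRingEnd ℂ (f y)) k z = 0)
    (x y : Fin n → ℂ) : f x = f y := by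
  refine is_const_of_fderiv_eq_zero hf (fun z => ?_) x y
  have h' : ∀ k, wirtZ f k z = 0 := fun k => by
    simpa [wirtZBar_conj (hf z)] using hconj k z
  refine ContinuousLinearMap.ext_single_one_single_I (fun k => ?_) (fun k => ?_)
  all_goals
    have a := h k z
    have b := h' k
    simp only [wirtZBar, wirtZ] at a b
    rw [zero_apply]
  · linear_combination a + b
  · linear_combination (-I) * a + I * b + fderiv ℝ f z (Pi.single k I) * I_mul_I

theorem eq_add_sum_of_wirtZ_eq {G : (Fin n → ℂ) → ℂ} (hG : Differentiable ℂ G)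
    (hm : ∀ j z, wirtZ G j z = wirtZ G j 0) (z : Fin n → ℂ) :
    G z = G 0 + ∑ j, wirtZ G j 0 * z j := by
  set L := fderiv ℂ G 0
  have hL : ∀ y, fderiv ℂ G y = L := fun y =>
    ContinuousLinearMap.coe_injective <| (Pi.basisFun ℂ (Fin n)).ext fun j => by
      simp [← wirtZ_eq_fderiv (hG y), ← wirtZ_eq_fderiv (hG 0), hm j y, L]
  have hconst := is_const_of_fderiv_eq_zero (hG.sub L.differentiable)
    (fun y => by rw [fderiv_sub (hG y) L.differentiableAt, hL, L.fderiv, sub_self]) z 0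
  have hsum : L z = ∑ j, wirtZ G j 0 * z j := by
    conv_lhs => rw [← Finset.univ_sum_single z, map_sum]
    refine Finset.sum_congr rfl fun j _ => ?_
    rw [wirtZ_eq_fderiv (hG 0), show Pi.single j (z j) = z j • Pi.single j (1 : ℂ) by
      simp [← Pi.single_smul], map_smul, smul_eq_mul, mul_comm]
  simp only [Pi.sub_apply, map_zero, sub_zero] at hconst
  rw [← hsum]
  linear_combination hconst

end Holomorphy

section HermitianModel

/-- The Hermitian form on `ℂⁿ⁺¹` with matrix `!![c, α / 2; αᴴ / 2, γ]`, evaluated at `(z, 1)`. -/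
def hermitianModel (c : Matrix (Fin n) (Fin n) ℂ) (α : Fin n → ℂ) (γ : ℝ) (z : Fin n → ℂ) : ℂ :=
  (∑ j, ∑ k, c j k * z j * starRingEnd ℂ (z k)) + ((∑ k, α k * z k).re : ℂ) + γ

variable {c : Matrix (Fin n) (Fin n) ℂ} {α : Fin n → ℂ} {γ : ℝ}

theorem hermitianModel_eq_sum_conj :
    hermitianModel c α γ = fun z => (∑ j, ∑ k, c j k * z j * starRingEnd ℂ (z k)) +
      (1 / 2 : ℂ) * ((∑ k, α k * z k) + ∑ k, starRingEnd ℂ (α k) * starRingEnd ℂ (z k)) + γ := by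
  funext z
  simp only [hermitianModel, re_eq_add_conj, map_sum, map_mul]
  ring

theorem contDiff_hermitianModel {m : WithTop ℕ∞} :
    ContDiff ℝ m (hermitianModel c α γ) := by
  rw [hermitianModel_eq_sum_conj]
  fun_prop

theorem wirtZBar_hermitianModel (l : Fin n) (z : Fin n → ℂ) :
    wirtZBar (hermitianModel c α γ) l z = ∑ j, c j l * z j + starRingEnd ℂ (α l) / 2 := by
  rw [hermitianModel_eq_sum_conj]
  simp (disch := fun_prop) only [wirtZBar_add, wirtZBar_sum, wirtZBar_mul, wirtZBar_apply,
    wirtZBar_conj_apply, wirtZBar_const]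
  simp
  ring

theorem conj_hermitianModel (hc : c.IsHermitian) (z : Fin n → ℂ) :
    starRingEnd ℂ (hermitianModel c α γ z) = hermitianModel c α γ z := by
  simp only [hermitianModel, map_add, map_sum, map_mul, conj_ofReal, conj_conj]
  congr 2
  rw [Finset.sum_comm]
  refine Finset.sum_congr rfl fun j _ => Finset.sum_congr rfl fun k _ => ?_
  rw [← hc.apply j k]
  simp only [RCLike.star_def]
  ring

end HermitianModel

section Classification

variable {ψ : (Fin n → ℂ) → ℝ}

theorem conj_wirtZBarR (hψ : DifferentiableAt ℝ ψ z) (k : Fin n) :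
    starRingEnd ℂ (wirtZBarR ψ k z) = wirtZ (fun y => (ψ y : ℂ)) k z := by
  have hF : DifferentiableAt ℝ (fun y => (ψ y : ℂ)) z := ofRealCLM.differentiableAt.comp z hψ
  rw [wirtZBarR, ← wirtZ_conj hF]
  simp only [conj_ofReal]

theorem conj_wirtZ_wirtZBarR (hψ : ContDiff ℝ 2 ψ) (j k : Fin n) (z : Fin n → ℂ) :
    starRingEnd ℂ (wirtZ (wirtZBarR ψ k) j z) = wirtZ (wirtZBarR ψ j) k z := by
  have hG : ContDiff ℝ 1 (wirtZBarR ψ k) := hψ.ofReal.wirtZBar le_rfl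
  rw [← wirtZBar_conj (hG.differentiable one_ne_zero z),
    funext fun y => conj_wirtZBarR (hψ.differentiable two_ne_zero y) k,
    wirtZBar_wirtZ_comm hψ.ofReal.contDiffAt]
  rfl

theorem wirtZ_wirtZBarR_eq_const (hψ : ContDiff ℝ 3 ψ)
    (hG : ∀ k, Differentiable ℂ (wirtZBarR ψ k)) (j k : Fin n) (z : Fin n → ℂ) :
    wirtZ (wirtZBarR ψ k) j z = wirtZ (wirtZBarR ψ k) j 0 := by
  have hG2 : ∀ k, ContDiff ℝ 2 (wirtZBarR ψ k) := fun k => hψ.ofReal.wirtZBar le_rfl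
  have holo : ∀ j k l y, wirtZBar (wirtZ (wirtZBarR ψ k) j) l y = 0 := fun j k l y => by
    rw [wirtZBar_wirtZ_comm (hG2 k).contDiffAt,
      funext fun y => (hG k y).wirtZBar_eq_zero (k := l), wirtZ_const]
  refine eq_of_wirtZBar_eq_zero_of_wirtZBar_conj_eq_zero
    (((hG2 k).wirtZ le_rfl).differentiable one_ne_zero) (holo j k) (fun l y => ?_) z 0
  simpa [conj_wirtZ_wirtZBarR (hψ.of_le (by norm_num))] using holo k j l y

theorem exists_hermitianModel_of_differentiable_wirtZBarR (hψ : ContDiff ℝ 3 ψ)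
    (hG : ∀ k, Differentiable ℂ (wirtZBarR ψ k)) :
    ∃ c : Matrix (Fin n) (Fin n) ℂ, c.IsHermitian ∧
      ∃ α : Fin n → ℂ, ∃ γ : ℝ, ∀ z, (ψ z : ℂ) = hermitianModel c α γ z := by
  set c : Matrix (Fin n) (Fin n) ℂ := Matrix.of fun j k => wirtZ (wirtZBarR ψ k) j 0
  have hc : c.IsHermitian := Matrix.ext fun j k => by
    simp [c, conj_wirtZ_wirtZBarR (hψ.of_le (by norm_num))]
  have affine : ∀ k z, wirtZBarR ψ k z = wirtZBarR ψ k 0 + ∑ j, c j k * z j := fun k =>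
    eq_add_sum_of_wirtZ_eq (hG k) (wirtZ_wirtZBarR_eq_const hψ hG · k)
  set α : Fin n → ℂ := fun k => 2 * starRingEnd ℂ (wirtZBarR ψ k 0)
  refine ⟨c, hc, α, ψ 0, fun z => ?_⟩
  set R : (Fin n → ℂ) → ℂ := fun y => (ψ y : ℂ) - hermitianModel c α (ψ 0) y
  have hψC : Differentiable ℝ (fun y => (ψ y : ℂ)) := hψ.ofReal.differentiable (by norm_num)
  have hmodel : Differentiable ℝ (hermitianModel c α (ψ 0)) :=
    (contDiff_hermitianModel (m := 1)).differentiable one_ne_zero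
  have hdbar : ∀ l y, wirtZBar R l y = 0 := fun l y => by
    rw [wirtZBar_sub (hψC y) (hmodel y), wirtZBar_hermitianModel]
    change wirtZBarR ψ l y - _ = 0
    simp [affine l y, α, map_ofNat]
    ring
  have hreal : (fun y => starRingEnd ℂ (R y)) = R := by
    funext y
    simp [R, conj_hermitianModel hc]
  have := eq_of_wirtZBar_eq_zero_of_wirtZBar_conj_eq_zero (f := R) (hψC.sub hmodel) hdbar
    (by rwa [hreal]) z 0
  rw [show R 0 = 0 by simp [R, hermitianModel]] at this
  exact sub_eq_zero.mp this

theorem differentiable_wirtZBarR_of_eq_hermitianModel {c : Matrix (Fin n) (Fin n) ℂ}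
    {α : Fin n → ℂ} {γ : ℝ} (h : ∀ z, (ψ z : ℂ) = hermitianModel c α γ z) (k : Fin n) :
    Differentiable ℂ (wirtZBarR ψ k) := by
  have hG : wirtZBarR ψ k = fun z => ∑ j, c j k * z j + starRingEnd ℂ (α k) / 2 := by
    funext z
    rw [← wirtZBar_hermitianModel]
    exact congrArg (wirtZBar · k z) (funext h)
  rw [hG]
  fun_prop

theorem differentiable_wirtZBarR_iff (hψ : ContDiff ℝ 3 ψ) :
    (∀ k, Differentiable ℂ (wirtZBarR ψ k)) ↔ ∃ c : Matrix (Fin n) (Fin n) ℂ, c.IsHermitian ∧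
      ∃ α : Fin n → ℂ, ∃ γ : ℝ, ∀ z, (ψ z : ℂ) = hermitianModel c α γ z :=
  ⟨exists_hermitianModel_of_differentiable_wirtZBarR hψ,
    fun ⟨_, _, _, _, h⟩ => differentiable_wirtZBarR_of_eq_hermitianModel h⟩

end Classification

section SharpField

/-- For `F = (1 + |z|²) φ` this is `1 + |z|²` times the `j`-th component of `(∂̄φ)^♯` with respect
to the Fubini–Study metric. -/
def dbarSharp (F : (Fin n → ℂ) → ℂ) (j : Fin n) (z : Fin n → ℂ) : ℂ :=
  wirtZBar F j z + z j * ((∑ l, starRingEnd ℂ (z l) * wirtZBar F l z) - F z)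

variable {F : (Fin n → ℂ) → ℂ}

theorem wirtZBar_dbarSharp (hF : ContDiff ℝ 2 F) (j k : Fin n) (z : Fin n → ℂ) :
    wirtZBar (dbarSharp F j) k z = wirtZBar (wirtZBar F j) k z +
      z j * ∑ l, starRingEnd ℂ (z l) * wirtZBar (wirtZBar F l) k z := by
  have hG : ∀ l, Differentiable ℝ (wirtZBar F l) := fun l =>
    (hF.wirtZBar le_rfl).differentiable one_ne_zero
  have hF' := hF.differentiable two_ne_zero
  unfold dbarSharp
  simp (disch := fun_prop) only [wirtZBar_add, wirtZBar_mul, wirtZBar_sub, wirtZBar_sum,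
    wirtZBar_apply, wirtZBar_conj_apply]
  simp [Finset.sum_add_distrib]

theorem eq_zero_of_add_mul_sum_conj_mul_eq_zero {a z : Fin n → ℂ}
    (h : ∀ j, a j + z j * ∑ l, starRingEnd ℂ (z l) * a l = 0) (j : Fin n) : a j = 0 := by
  set S := ∑ l, starRingEnd ℂ (z l) * a l
  have hS : ((1 + normSq' z : ℝ) : ℂ) * S = 0 := calc
    ((1 + normSq' z : ℝ) : ℂ) * S = S + ∑ l, starRingEnd ℂ (z l) * (z l * S) := by
      push_cast
      rw [ofReal_normSq', add_mul, one_mul, Finset.sum_mul]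
      exact congrArg (S + ·) (Finset.sum_congr rfl fun l _ => by ring)
    _ = ∑ l, starRingEnd ℂ (z l) * (a l + z l * S) := by
      simp only [mul_add, Finset.sum_add_distrib, S]
    _ = 0 := by simp [h]
  have hpos : ((1 + normSq' z : ℝ) : ℂ) ≠ 0 := by
    have : 0 ≤ normSq' z := Finset.sum_nonneg fun i _ => normSq_nonneg _
    exact_mod_cast (by positivity : 1 + normSq' z ≠ 0)
  have hS0 : S = 0 := (mul_eq_zero.1 hS).resolve_left hpos
  simpa [hS0] using h j

theorem differentiable_dbarSharp_iff (hF : ContDiff ℝ 2 F) :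
    (∀ j, Differentiable ℂ (dbarSharp F j)) ↔ ∀ j, Differentiable ℂ (wirtZBar F j) := by
  have hG : ∀ l, Differentiable ℝ (wirtZBar F l) := fun l =>
    (hF.wirtZBar le_rfl).differentiable one_ne_zero
  have hF' := hF.differentiable two_ne_zero
  have hV : ∀ j, Differentiable ℝ (dbarSharp F j) := fun j => by
    unfold dbarSharp
    fun_prop
  simp only [differentiable_complex_iff_wirtZBar_eq_zero (hV _),
    differentiable_complex_iff_wirtZBar_eq_zero (hG _), wirtZBar_dbarSharp hF]
  refine ⟨fun h j k z => ?_, fun h j k z => by simp [h]⟩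
  exact eq_zero_of_add_mul_sum_conj_mul_eq_zero
    (a := fun l => wirtZBar (wirtZBar F l) k z) (fun j => h j k z) j

end SharpField

section FubiniStudy

variable {φ : (Fin n → ℂ) → ℝ}

theorem wirtZBarR_one_add_normSq'_mul (hφ : Differentiable ℝ φ) (j : Fin n) (z : Fin n → ℂ) :
    wirtZBarR (fun z => (1 + normSq' z) * φ z) j z =
      z j * φ z + (1 + normSq' z : ℝ) * wirtZBarR φ j z := by
  have hφC : Differentiable ℝ (fun w => (φ w : ℂ)) := ofRealCLM.differentiable.comp hφ
  unfold wirtZBarR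
  simp only [ofReal_mul, ofReal_add, ofReal_one, ofReal_normSq']
  simp (disch := fun_prop) only [wirtZBar_mul, wirtZBar_add, wirtZBar_sum, wirtZBar_apply,
    wirtZBar_conj_apply, wirtZBar_const]
  simp
  ring

theorem dbarSharp_one_add_normSq'_mul (hφ : Differentiable ℝ φ) (j : Fin n) :
    dbarSharp (fun z => (((1 + normSq' z) * φ z : ℝ) : ℂ)) j = fun z =>
      ((1 + normSq' z : ℝ) : ℂ) *
        (wirtZBarR φ j z + z j * ∑ l, starRingEnd ℂ (z l) * wirtZBarR φ l z) := by
  funext z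
  show wirtZBarR _ j z + z j * ((∑ l, starRingEnd ℂ (z l) * wirtZBarR _ l z) - _) = _
  simp only [wirtZBarR_one_add_normSq'_mul hφ, ofReal_mul]
  set P : ℂ := ((1 + normSq' z : ℝ) : ℂ)
  have hsum : ∑ l, starRingEnd ℂ (z l) * (z l * φ z + P * wirtZBarR φ l z) =
      (P - 1) * φ z + P * ∑ l, starRingEnd ℂ (z l) * wirtZBarR φ l z := by
    rw [show P - 1 = ∑ l, z l * starRingEnd ℂ (z l) by simp [P, ofReal_normSq'],
      Finset.sum_mul, Finset.mul_sum, ← Finset.sum_add_distrib]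
    exact Finset.sum_congr rfl fun l _ => by ring
  rw [hsum]
  ring

end FubiniStudy

theorem stmt5_general (n : ℕ) (φ : (Fin n → ℂ) → ℝ)
    (hφ : ContDiff ℝ (⊤ : ℕ∞) φ) :
    (∀ j : Fin n,
      Differentiable ℂ
        (fun z =>
          ((1 + normSq' z : ℝ) : ℂ) *
            (wirtZBarR φ j z +
              z j * ∑ l, (starRingEnd ℂ) (z l) * wirtZBarR φ l z))) ↔
      ∃ c : Matrix (Fin n) (Fin n) ℂ, c.IsHermitian ∧
        ∃ α : Fin n → ℂ, ∃ γ : ℝ,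
          ∀ z : Fin n → ℂ,
            (((1 + normSq' z) * φ z : ℝ) : ℂ) =
              (∑ j, ∑ k, c j k * z j * (starRingEnd ℂ) (z k)) +
                (((∑ k, α k * z k).re : ℝ) : ℂ) + (γ : ℂ) := by
  have hφ3 : ContDiff ℝ 3 φ := hφ.of_le (WithTop.coe_le_coe.2 le_top)
  have hψ : ContDiff ℝ 3 (fun z => (1 + normSq' z) * φ z) :=
    (contDiff_const.add contDiff_normSq').mul hφ3
  simp only [← dbarSharp_one_add_normSq'_mul (hφ3.differentiable (by norm_num))]
  rw [differentiable_dbarSharp_iff (hψ.ofReal.of_le (by norm_num))]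
  exact differentiable_wirtZBarR_iff hψ

/-- for smooth `φ : ℂⁿ → ℝ` with `{φ > 0}` nonempty, the
components `(1 + |z|²)(∂φ/∂z̄ⱼ + zⱼ Σ_l z̄_l ∂φ/∂z̄_l)` of the gradient field of
`φ` w.r.t. the Fubini–Study metric are all entire iff
`(1 + |z|²) φ(z) = Σ c_{jk} z_j z̄_k + Re Σ α_k z_k + γ` for a Hermitian matrix
`c`, complex constants `α` and a real constant `γ`. -/
theorem stmt5 (n : ℕ) (hn : 2 ≤ n) (φ : (Fin n → ℂ) → ℝ)
    (hφ : ContDiff ℝ (⊤ : ℕ∞) φ)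
    (hpos : ∃ z : Fin n → ℂ, 0 < φ z) :
    (∀ j : Fin n,
      Differentiable ℂ
        (fun z =>
          ((1 + normSq' z : ℝ) : ℂ) *
            (wirtZBarR φ j z +
              z j * ∑ l, (starRingEnd ℂ) (z l) * wirtZBarR φ l z))) ↔
      ∃ c : Matrix (Fin n) (Fin n) ℂ, c.IsHermitian ∧
        ∃ α : Fin n → ℂ, ∃ γ : ℝ,
          ∀ z : Fin n → ℂ,
            (((1 + normSq' z) * φ z : ℝ) : ℂ) =
              (∑ j, ∑ k, c j k * z j * (starRingEnd ℂ) (z k)) +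
                (((∑ k, α k * z k).re : ℝ) : ℂ) + (γ : ℂ) :=
  stmt5_general n φ hφ
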